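/- Let S be a Stallings section for an m-epi π : Ã* → G and let H be a finitely generated subgroup of G. Then there exists a finite inverse Ã-automaton A with basepoint such that S_H ⊆ L(A) ⊆ Hπ⁻¹; in particular there exists a regular language L ⊆ Ã* with S_H ⊆ L ⊆ Hπ⁻¹. -/

import Mathlib

/-!  Common framework: words over an involutive alphabet Ã = A ∪ A⁻¹ (modelled as
`α × Bool`), free reduction, matched epimorphisms, Stallings sections and
Ã-automata, following Silva–Soler-Escrivà–Ventura. -/

/-- A word over the involutive alphabet Ã = A ∪ A⁻¹: the letter `(a, tt)` denotes
`a` and `(a, ff)` denotes `a⁻¹` (the `FreeGroup` convention). -/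
abbrev Word (α : Type) : Type := List (α × Bool)

namespace Stallings

instance {β : Type} : HasSubset (Language β) := ⟨fun L M => ∀ w ∈ L, w ∈ M⟩
instance {β : Type} : Union (Language β) := ⟨fun L M => {w | w ∈ L ∨ w ∈ M}⟩
instance {β : Type} : Inter (Language β) := ⟨fun L M => {w | w ∈ L ∧ w ∈ M}⟩
instance {β : Type} : EmptyCollection (Language β) := ⟨(∅ : Set (List β))⟩

variable {α : Type} {G : Type} [Group G]

/-- The formal inverse of a letter of Ã. -/
def letterInv (x : α × Bool) : α × Bool := (x.1, !x.2)

/-- The formal inverse `w⁻¹` of a word over Ã. -/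
def wordInv (w : Word α) : Word α := (w.map letterInv).reverse

/-- The free reduction `w̄` of a word over Ã (iterated deletion of factors `a a⁻¹`). -/
noncomputable def redW (w : Word α) : Word α :=
  letI := Classical.decEq α
  FreeGroup.reduce w

/-- The reduction `L̄` of a language over Ã. -/
noncomputable def red (L : Language (α × Bool)) : Language (α × Bool) :=
  redW '' L

/-- The set `R_A` of reduced words over Ã. -/
noncomputable def Reduced : Language (α × Bool) := {w | redW w = w}

/-- Evaluation of a monoid homomorphism `π : Ã* → G` at a word. -/
def ev (π : FreeMonoid (α × Bool) →* G) (w : Word α) : G :=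
  π (FreeMonoid.ofList w)

/-- The image of a language under (evaluation of) `π`. -/
def evImg (π : FreeMonoid (α × Bool) →* G) (L : Language (α × Bool)) : Set G :=
  {g | ∃ w ∈ L, ev π w = g}

/-- A matched epimorphism (m-epi) `π : Ã* → G`: a surjective monoid homomorphism
sending formal inverses to inverses. -/
structure IsMEpi (π : FreeMonoid (α × Bool) →* G) : Prop where
  surjective : Function.Surjective π
  matched : ∀ (a : α) (b : Bool),
    π (FreeMonoid.of (a, !b)) = (π (FreeMonoid.of (a, b)))⁻¹

/-- `S_X = Xπ⁻¹ ∩ S`, for `X ⊆ G`. -/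
def sub (S : Language (α × Bool)) (π : FreeMonoid (α × Bool) →* G) (X : Set G) :
    Language (α × Bool) :=
  {w ∈ S | ev π w ∈ X}

/-- A Stallings section for an m-epi `π : Ã* → G`: a regular section `S ⊆ R_A`
such that each `S_g` is regular (S1), and `S_{gh} ⊆ (S_g S_h)‾` (S2). -/
structure IsStallingsSection (π : FreeMonoid (α × Bool) →* G)
    (S : Language (α × Bool)) : Prop where
  regular : S.IsRegular
  reduced : S ⊆ Reduced
  inv_mem : ∀ w ∈ S, wordInv w ∈ S
  exists_rep : ∀ g : G, ∃ w ∈ S, ev π w = g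
  s1 : ∀ g : G, (sub S π {g}).IsRegular
  s2 : ∀ g h : G, sub S π {g * h} ⊆ red (sub S π {g} * sub S π {h})

/-- A group has a Stallings section if some m-epi onto it (from the free monoid on
an involutive finite alphabet) admits a Stallings section. -/
def HasStallingsSection (G : Type) [Group G] : Prop :=
  ∃ (α : Type) (π : FreeMonoid (α × Bool) →* G) (S : Language (α × Bool)),
    Finite α ∧ IsMEpi π ∧ IsStallingsSection π S

/-- `Pref L`: the set of prefixes of words of `L`. -/
def Pref (L : Language (α × Bool)) : Language (α × Bool) :=
  {u | ∃ v, u ++ v ∈ L}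

/-- An extendable Stallings section: every `u ∈ S` admits a reduced word `v` with
`u vⁿ ∈ S` for all `n` and `u ∈ Pref (S_{(u vⁿ u⁻¹)π})` for almost all `n`. -/
def Extendable (π : FreeMonoid (α × Bool) →* G) (S : Language (α × Bool)) : Prop :=
  ∀ u ∈ S, ∃ v : Word α, v ∈ Reduced ∧
    (∀ n : ℕ, u ++ (List.replicate n v).flatten ∈ S) ∧
    ∃ N : ℕ, ∀ n ≥ N, u ∈ Pref (sub S π {ev π u * (ev π v) ^ n * (ev π u)⁻¹})

/-- An Ã-automaton with state type `Q`, initial state `start`, terminal states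
`accept` and edge set `edges`. -/
structure Automaton (β : Type) (Q : Type) where
  start : Q
  accept : Set Q
  edges : Set (Q × β × Q)

namespace Automaton

variable {β Q : Type}

/-- `M.Path p w q`: there is a path from `p` to `q` labelled `w`. -/
inductive Path (M : Automaton β Q) : Q → List β → Q → Prop
  | nil (q : Q) : Path M q [] q
  | cons {p q r : Q} {a : β} {w : List β} :
      (p, a, q) ∈ M.edges → Path M q w r → Path M p (a :: w) r

/-- The language recognized by an automaton. -/
def lang (M : Automaton β Q) : Language β :=
  {w | ∃ t ∈ M.accept, M.Path M.start w t}

/-- A trim automaton: every state lies on some successful path. -/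
def Trim (M : Automaton β Q) : Prop :=
  ∀ q : Q, ∃ (u v : List β) (t : Q), t ∈ M.accept ∧ M.Path M.start u q ∧ M.Path q v t

/-- An involutive Ã-automaton. -/
def Involutive {α : Type} (M : Automaton (α × Bool) Q) : Prop :=
  ∀ p a q, (p, a, q) ∈ M.edges → (q, letterInv a, p) ∈ M.edges

/-- A deterministic automaton. -/
def Deterministic (M : Automaton β Q) : Prop :=
  ∀ p a q q', (p, a, q) ∈ M.edges → (p, a, q') ∈ M.edges → q = q'

/-- An inverse automaton: involutive, deterministic, trim, with a single
terminal state. -/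
def IsInverse {α : Type} (M : Automaton (α × Bool) Q) : Prop :=
  M.Involutive ∧ M.Deterministic ∧ M.Trim ∧ ∃ t : Q, M.accept = {t}

/-- The automaton obtained by identifying the states `p` and `q` (the quotient is
realized on the same state type, redirecting `q` to `p`). -/
def merge [DecidableEq Q] (M : Automaton β Q) (p q : Q) : Automaton β Q :=
  let f : Q → Q := fun x => if x = q then p else x
  { start := f M.start
    accept := f '' M.accept
    edges := {e | ∃ e' ∈ M.edges, e = (f e'.1, e'.2.1, f e'.2.2)} }

end Automaton

end Stallings

/-! Let `Γ = T ∪ T⁻¹ ∪ {1}` for a finite generating set `T` of `H`. Every `h ∈ H` is a product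
of elements of `Γ`, so by (S2) every word of `S_H` is the free reduction of a concatenation of
words of `S_Γ`. Read in the Schreier graph of `H`, the words of `S_Γ` are loops at the basepoint
`H`, and by (S1) they visit only finitely many cosets: a prefix `u` of a word of the regular
language `S_g` determines `uπ` through its left quotient. The Schreier graph restricted to these
cosets is a finite inverse automaton; its language lies in `Hπ⁻¹`, contains the concatenations,
and, being deterministic and involutive, is closed under free reduction. -/

namespace Stallings

variable {α G : Type} [Group G]

theorem ev_nil (π : FreeMonoid (α × Bool) →* G) : ev π [] = 1 :=
  map_one π

theorem ev_append (π : FreeMonoid (α × Bool) →* G) (u v : Word α) :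
    ev π (u ++ v) = ev π u * ev π v :=
  map_mul π _ _

theorem ev_cons (π : FreeMonoid (α × Bool) →* G) (a : α × Bool) (w : Word α) :
    ev π (a :: w) = ev π [a] * ev π w :=
  ev_append π [a] w

theorem IsMEpi.ev_letterInv {π : FreeMonoid (α × Bool) →* G} (hπ : IsMEpi π) (a : α × Bool) :
    ev π [letterInv a] = (ev π [a])⁻¹ :=
  hπ.matched a.1 a.2

theorem mem_pref_of_prefix {L : Language (α × Bool)} {u w : Word α} (huw : u <+: w)
    (hw : w ∈ Pref L) : u ∈ Pref L := by
  obtain ⟨v, rfl⟩ := huw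
  obtain ⟨x, hx⟩ := hw
  exact ⟨v ++ x, by simpa using hx⟩

theorem finite_evImg_pref (π : FreeMonoid (α × Bool) →* G) {L : Language (α × Bool)}
    (hL : L.IsRegular) {g : G} (hg : ∀ w ∈ L, ev π w = g) : (evImg π (Pref L)).Finite := by
  let value : Language (α × Bool) → G := fun K => g * (ev π (Classical.epsilon (· ∈ K)))⁻¹
  refine (hL.finite_range_leftQuotient.image value).subset ?_
  rintro _ ⟨u, ⟨x, hx⟩, rfl⟩
  refine ⟨L.leftQuotient u, ⟨u, rfl⟩, ?_⟩
  have hsuffix : u ++ Classical.epsilon (· ∈ L.leftQuotient u) ∈ L :=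
    Classical.epsilon_spec (p := (· ∈ L.leftQuotient u)) ⟨x, hx⟩
  show g * _ = _
  rw [← hg _ hsuffix, ev_append, mul_inv_cancel_right]

namespace Automaton

variable {β Q : Type}

theorem Path.append {M : Automaton β Q} {p q r : Q} {u v : List β}
    (h : M.Path p u q) (h' : M.Path q v r) : M.Path p (u ++ v) r := by
  induction h with
  | nil => exact h'
  | cons e _ ih => exact Path.cons e (ih h')

theorem path_cons_iff {M : Automaton β Q} {p r : Q} {a : β} {w : List β} :
    M.Path p (a :: w) r ↔ ∃ q, (p, a, q) ∈ M.edges ∧ M.Path q w r := by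
  refine ⟨fun h => ?_, fun ⟨_, e, h⟩ => Path.cons e h⟩
  cases h with
  | cons e h => exact ⟨_, e, h⟩

theorem path_append_iff {M : Automaton β Q} {p r : Q} {u v : List β} :
    M.Path p (u ++ v) r ↔ ∃ q, M.Path p u q ∧ M.Path q v r := by
  refine ⟨fun h => ?_, fun ⟨_, h₁, h₂⟩ => h₁.append h₂⟩
  induction u generalizing p with
  | nil => exact ⟨p, Path.nil p, h⟩
  | cons a u ih =>
    obtain ⟨q, e, h⟩ := path_cons_iff.1 h
    obtain ⟨m, h₁, h₂⟩ := ih h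
    exact ⟨m, Path.cons e h₁, h₂⟩

theorem append_mem_lang {M : Automaton β Q} (hacc : M.accept = {M.start}) {u v : List β}
    (hu : u ∈ M.lang) (hv : v ∈ M.lang) : u ++ v ∈ M.lang := by
  obtain ⟨t, ht, hu⟩ := hu
  obtain ⟨t', ht', hv⟩ := hv
  rw [hacc] at ht
  subst ht
  exact ⟨t', ht', hu.append hv⟩

theorem Path.of_red_step {M : Automaton (α × Bool) Q} (hdet : M.Deterministic)
    (hinv : M.Involutive) {p q : Q} {w w' : Word α} (hstep : FreeGroup.Red.Step w w')
    (h : M.Path p w q) : M.Path p w' q := by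
  cases hstep with
  | @not _ _ x b =>
    obtain ⟨m, h₁, h₂⟩ := path_append_iff.1 h
    obtain ⟨r, e₁, h₃⟩ := path_cons_iff.1 h₂
    obtain ⟨m', e₂, h₄⟩ := path_cons_iff.1 h₃
    obtain rfl : m = m' := hdet r (x, !b) m m' (hinv _ _ _ e₁) e₂
    exact h₁.append h₄

theorem Path.of_red {M : Automaton (α × Bool) Q} (hdet : M.Deterministic)
    (hinv : M.Involutive) {p q : Q} {w w' : Word α} (hred : FreeGroup.Red w w')
    (h : M.Path p w q) : M.Path p w' q := by
  induction hred with
  | refl => exact h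
  | tail _ hstep ih => exact ih.of_red_step hdet hinv hstep

theorem Path.redW {M : Automaton (α × Bool) Q} (hdet : M.Deterministic)
    (hinv : M.Involutive) {p q : Q} {w : Word α} (h : M.Path p w q) :
    M.Path p (Stallings.redW w) q := by
  classical
  exact h.of_red hdet hinv FreeGroup.reduce.red

theorem redW_mem_lang {M : Automaton (α × Bool) Q} (hdet : M.Deterministic)
    (hinv : M.Involutive) {w : Word α} (hw : w ∈ M.lang) : Stallings.redW w ∈ M.lang := by
  obtain ⟨t, ht, h⟩ := hw
  exact ⟨t, ht, h.redW hdet hinv⟩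

def toNFA (M : Automaton β Q) : NFA β Q where
  step p a := {q | (p, a, q) ∈ M.edges}
  start := {M.start}
  accept := M.accept

theorem path_iff_nonempty_toNFA_path {M : Automaton β Q} {p q : Q} {w : List β} :
    M.Path p w q ↔ Nonempty (M.toNFA.Path p q w) := by
  constructor
  · intro h
    induction h with
    | nil q => exact ⟨.nil q⟩
    | cons e _ ih => exact ⟨.cons _ _ _ _ _ e ih.some⟩
  · rintro ⟨h⟩
    induction h with
    | nil q => exact .nil q
    | cons _ _ _ _ _ e _ ih => exact .cons e ih

theorem lang_isRegular (M : Automaton β Q) [Finite Q] : M.lang.IsRegular := by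
  have : Fintype Q := Fintype.ofFinite Q
  refine ⟨Set Q, inferInstance, M.toNFA.toDFA, ?_⟩
  ext w
  simp only [NFA.toDFA_correct, NFA.accepts_iff_exists_path, ← path_iff_nonempty_toNFA_path]
  exact ⟨fun ⟨_, rfl, t, ht, h⟩ => ⟨t, ht, h⟩, fun ⟨t, ht, h⟩ => ⟨_, rfl, t, ht, h⟩⟩

def induce (M : Automaton β Q) (C : Set Q) (hC : M.start ∈ C) : Automaton β C where
  start := ⟨M.start, hC⟩
  accept := Subtype.val ⁻¹' M.accept
  edges := {e | (e.1.1, e.2.1, e.2.2.1) ∈ M.edges}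

variable {C : Set Q}

theorem induce_deterministic {M : Automaton β Q} (hC : M.start ∈ C) (h : M.Deterministic) :
    (M.induce C hC).Deterministic :=
  fun p a q q' hq hq' => Subtype.ext (h p a q q' hq hq')

theorem induce_involutive {M : Automaton (α × Bool) Q} (hC : M.start ∈ C)
    (h : M.Involutive) : (M.induce C hC).Involutive :=
  fun p a q he => h p a q he

theorem Path.of_induce {M : Automaton β Q} {hC : M.start ∈ C} {p q : C} {w : List β}
    (h : (M.induce C hC).Path p w q) : M.Path p w q := by
  induction h with
  | nil q => exact Path.nil _
  | cons e _ ih => exact Path.cons e ih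

end Automaton

open Automaton

section Schreier

variable (π : FreeMonoid (α × Bool) →* G) (H : Subgroup G)

/-- The Schreier automaton of `H`. The coset `Hx` of the paper is encoded as the left coset
`x⁻¹H ∈ G ⧸ H`, so that the edge `Hx —a→ Hx(aπ)` becomes `q —a→ (aπ)⁻¹ • q` for Mathlib's left
action of `G` on `G ⧸ H`. -/
def schreier : Automaton (α × Bool) (G ⧸ H) where
  start := ((1 : G) : G ⧸ H)
  accept := {((1 : G) : G ⧸ H)}
  edges := {e | e.2.2 = (ev π [e.2.1])⁻¹ • e.1}

variable {π H}

theorem schreier_deterministic : (schreier π H).Deterministic := by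
  intro p a q q' (hq : q = _) (hq' : q' = _)
  exact hq.trans hq'.symm

theorem schreier_involutive (hπ : IsMEpi π) : (schreier π H).Involutive := by
  intro p a q (hq : q = (ev π [a])⁻¹ • p)
  subst hq
  show p = (ev π [letterInv a])⁻¹ • (ev π [a])⁻¹ • p
  rw [hπ.ev_letterInv, inv_inv, smul_inv_smul]

theorem schreier_path {p q : G ⧸ H} {w : Word α} (h : (schreier π H).Path p w q) :
    q = (ev π w)⁻¹ • p := by
  induction h with
  | nil q => rw [ev_nil, inv_one, one_smul]
  | @cons p q r a w e _ ih =>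
    rw [ih, show q = (ev π [a])⁻¹ • p from e, ev_cons π a w, mul_inv_rev, mul_smul]

theorem induce_schreier_path {C : Set (G ⧸ H)} (hC : (schreier π H).start ∈ C) {p : C}
    {w : Word α} (hw : ∀ v, v <+: w → (ev π v)⁻¹ • (p : G ⧸ H) ∈ C) :
    ((schreier π H).induce C hC).Path p w
      ⟨(ev π w)⁻¹ • (p : G ⧸ H), hw w (List.prefix_refl w)⟩ := by
  induction w generalizing p with
  | nil =>
    convert Path.nil p
    rw [ev_nil, inv_one, one_smul]
  | cons a w ih =>
    let q : C := ⟨(ev π [a])⁻¹ • (p : G ⧸ H), hw [a] (by simp)⟩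
    have hq : ∀ v, v <+: w → (ev π v)⁻¹ • (q : G ⧸ H) ∈ C := fun v hv => by
      simpa [q, ev_cons π a v, mul_smul] using hw (a :: v) (List.cons_prefix_cons.2 ⟨rfl, hv⟩)
    convert Path.cons (M := (schreier π H).induce C hC) (q := q) rfl (ih hq) using 2
    rw [ev_cons π a w, mul_inv_rev, mul_smul]

theorem ev_mem_of_mem_induce_schreier_lang {C : Set (G ⧸ H)} {hC : (schreier π H).start ∈ C}
    {w : Word α} (hw : w ∈ ((schreier π H).induce C hC).lang) : ev π w ∈ H := by
  obtain ⟨t, ht, h⟩ := hw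
  have hend : (t : G ⧸ H) = (ev π w)⁻¹ • ((1 : G) : G ⧸ H) := schreier_path h.of_induce
  rw [show (t : G ⧸ H) = ((1 : G) : G ⧸ H) from ht, MulAction.Quotient.smul_coe, smul_eq_mul,
    mul_one, QuotientGroup.eq, inv_one, one_mul] at hend
  exact inv_mem_iff.1 hend

end Schreier

theorem sub_subset_lang_of_mem_closure {Q : Type} {π : FreeMonoid (α × Bool) →* G}
    {S : Language (α × Bool)} (hS : IsStallingsSection π S) {M : Automaton (α × Bool) Q}
    (hdet : M.Deterministic) (hinv : M.Involutive) (hacc : M.accept = {M.start}) {T : Set G}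
    (hT : ∀ g ∈ T ∪ T⁻¹ ∪ {1}, sub S π {g} ⊆ M.lang) {h : G} (hh : h ∈ Subgroup.closure T) :
    sub S π {h} ⊆ M.lang := by
  induction hh using Subgroup.closure_induction'' with
  | mem g hg => exact hT g (.inl (.inl hg))
  | inv_mem g hg => exact hT g⁻¹ (.inl (.inr (Set.inv_mem_inv.2 hg)))
  | one => exact hT 1 (.inr rfl)
  | mul g g' _ _ ih ih' =>
    intro w hw
    obtain ⟨c, hc, rfl⟩ := hS.s2 g g' w hw
    obtain ⟨u, hu, v, hv, rfl⟩ := Language.mem_mul.1 hc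
    exact redW_mem_lang hdet hinv (append_mem_lang hacc (ih u hu) (ih' v hv))

section PetalAutomaton

variable (π : FreeMonoid (α × Bool) →* G) (H : Subgroup G) (S : Language (α × Bool))
  (Γ : Set G)

def petalStates : Set (G ⧸ H) :=
  insert (schreier π H).start
    {q | ∃ u ∈ Pref (sub S π Γ), q = (ev π u)⁻¹ • (schreier π H).start}

def petalAutomaton : Automaton (α × Bool) (petalStates π H S Γ) :=
  (schreier π H).induce _ (Set.mem_insert _ _)

variable {π H S Γ}

theorem smul_schreier_start_of_mem {g : G} (hg : g ∈ H) :
    g • (schreier π H).start = (schreier π H).start := by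
  show g • ((1 : G) : G ⧸ H) = ((1 : G) : G ⧸ H)
  rw [MulAction.Quotient.smul_coe, smul_eq_mul, mul_one, QuotientGroup.eq, mul_one]
  exact H.inv_mem hg

theorem petalStates_finite (hS : IsStallingsSection π S) (hΓ : Γ.Finite) :
    (petalStates π H S Γ).Finite := by
  have hvalues : (evImg π (Pref (sub S π Γ))).Finite := by
    refine (hΓ.biUnion fun g _ => finite_evImg_pref π (hS.s1 g) fun w hw => hw.2).subset ?_
    rintro _ ⟨u, ⟨v, huv⟩, rfl⟩
    exact Set.mem_biUnion huv.2 ⟨u, ⟨v, huv.1, rfl⟩, rfl⟩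
  refine ((hvalues.image fun g => g⁻¹ • (schreier π H).start).insert
    (schreier π H).start).subset ?_
  rintro _ (rfl | ⟨u, hu, rfl⟩)
  · exact Set.mem_insert _ _
  · exact Set.mem_insert_of_mem _ ⟨ev π u, ⟨u, hu, rfl⟩, rfl⟩

theorem petalAutomaton_path {u v : Word α} (huv : u ++ v ∈ Pref (sub S π Γ))
    {p q : petalStates π H S Γ} (hp : (p : G ⧸ H) = (ev π u)⁻¹ • (schreier π H).start)
    (hq : (q : G ⧸ H) = (ev π (u ++ v))⁻¹ • (schreier π H).start) :
    (petalAutomaton π H S Γ).Path p v q := by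
  have hstates : ∀ v', v' <+: v → (ev π v')⁻¹ • (p : G ⧸ H) ∈ petalStates π H S Γ :=
    fun v' hv' => .inr ⟨u ++ v', mem_pref_of_prefix ((List.prefix_append_right_inj u).2 hv') huv,
      by rw [hp, ev_append, mul_inv_rev, mul_smul]⟩
  obtain rfl : q = ⟨_, hstates v (List.prefix_refl v)⟩ :=
    Subtype.ext (show (q : G ⧸ H) = (ev π v)⁻¹ • (p : G ⧸ H) by
      rw [hq, hp, ev_append, mul_inv_rev, mul_smul])
  exact induce_schreier_path (Set.mem_insert _ _) hstates

theorem petalAutomaton_accept :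
    (petalAutomaton π H S Γ).accept = {(petalAutomaton π H S Γ).start} := by
  ext q
  show (q : G ⧸ H) ∈ ({_} : Set (G ⧸ H)) ↔ _
  rw [Set.mem_singleton_iff, Set.mem_singleton_iff, Subtype.ext_iff]
  rfl

theorem start_mem_petalAutomaton_accept :
    (petalAutomaton π H S Γ).start ∈ (petalAutomaton π H S Γ).accept :=
  Set.mem_singleton _

variable (hΓH : Γ ⊆ H)
include hΓH

theorem sub_subset_petalAutomaton_lang : sub S π Γ ⊆ (petalAutomaton π H S Γ).lang := by
  intro w hw
  refine ⟨_, start_mem_petalAutomaton_accept, petalAutomaton_path (u := []) ⟨[], by simpa using hw⟩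
    (by rw [ev_nil, inv_one, one_smul]; rfl) ?_⟩
  rw [List.nil_append, smul_schreier_start_of_mem (H.inv_mem (hΓH hw.2))]
  rfl

theorem petalAutomaton_trim : (petalAutomaton π H S Γ).Trim := by
  rintro ⟨_, rfl | ⟨u, ⟨v, huv⟩, rfl⟩⟩
  · exact ⟨[], [], _, start_mem_petalAutomaton_accept, Path.nil _, Path.nil _⟩
  refine ⟨u, v, _, start_mem_petalAutomaton_accept,
    petalAutomaton_path (u := []) ⟨v, by simpa using huv⟩ ?_ rfl,
    petalAutomaton_path ⟨[], by simpa using huv⟩ rfl ?_⟩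
  · rw [ev_nil, inv_one, one_smul]
    rfl
  · rw [smul_schreier_start_of_mem (H.inv_mem (hΓH huv.2))]
    rfl

theorem petalAutomaton_isInverse (hπ : IsMEpi π) : (petalAutomaton π H S Γ).IsInverse :=
  ⟨induce_involutive _ (schreier_involutive hπ), induce_deterministic _ schreier_deterministic,
    petalAutomaton_trim hΓH, _, petalAutomaton_accept⟩

end PetalAutomaton

end Stallings

open Stallings in
theorem exists_inverse_automaton_sandwich_general {α G : Type} [Group G]
    (π : FreeMonoid (α × Bool) →* G) (hπ : IsMEpi π)
    (S : Language (α × Bool)) (hS : IsStallingsSection π S)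
    (H : Subgroup G) (hH : H.FG) :
    (∃ (Q : Type) (_ : Fintype Q) (M : Automaton (α × Bool) Q),
        M.IsInverse ∧ M.accept = {M.start} ∧
        sub S π ↑H ⊆ M.lang ∧ ∀ w ∈ M.lang, ev π w ∈ H) ∧
    ∃ L : Language (α × Bool), L.IsRegular ∧
        sub S π ↑H ⊆ L ∧ ∀ w ∈ L, ev π w ∈ H := by
  obtain ⟨T, hT⟩ := hH
  let Γ : Set G := ↑T ∪ (↑T)⁻¹ ∪ {1}
  have hΓ : Γ.Finite := (T.finite_toSet.union T.finite_toSet.inv).union (Set.finite_singleton 1)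
  have hΓH : Γ ⊆ H := by
    rw [← hT]
    rintro g ((hg | hg) | rfl)
    · exact Subgroup.subset_closure hg
    · exact inv_inv g ▸ Subgroup.inv_mem _ (Subgroup.subset_closure hg)
    · exact Subgroup.one_mem _
  let M := petalAutomaton π H S Γ
  have := (petalStates_finite (H := H) hS hΓ).fintype
  have hM : M.IsInverse := petalAutomaton_isInverse hΓH hπ
  have hsub : sub S π ↑H ⊆ M.lang := fun w hw =>
    sub_subset_lang_of_mem_closure hS hM.2.1 hM.1 petalAutomaton_accept
      (fun g hg w hw => sub_subset_petalAutomaton_lang hΓH w ⟨hw.1, (hw.2 : ev π w = g) ▸ hg⟩)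
      (hT ▸ hw.2) w ⟨hw.1, rfl⟩
  have hev : ∀ w ∈ M.lang, ev π w ∈ H := fun w hw => ev_mem_of_mem_induce_schreier_lang hw
  exact ⟨⟨_, inferInstance, M, hM, petalAutomaton_accept, hsub, hev⟩,
    M.lang, M.lang_isRegular, hsub, hev⟩

open Stallings in
/-- Let `S` be a Stallings section for the m-epi `π` and `H` a f.g.
subgroup of `G`. Then there is a finite inverse Ã-automaton `M` with basepoint
such that `S_H ⊆ L(M) ⊆ Hπ⁻¹`; in particular some regular language `L` satisfies
`S_H ⊆ L ⊆ Hπ⁻¹`. -/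
theorem exists_inverse_automaton_sandwich {α G : Type} [Finite α] [Group G]
    (π : FreeMonoid (α × Bool) →* G) (hπ : IsMEpi π)
    (S : Language (α × Bool)) (hS : IsStallingsSection π S)
    (H : Subgroup G) (hH : H.FG) :
    (∃ (Q : Type) (_ : Fintype Q) (M : Automaton (α × Bool) Q),
        M.IsInverse ∧ M.accept = {M.start} ∧
        sub S π ↑H ⊆ M.lang ∧ ∀ w ∈ M.lang, ev π w ∈ H) ∧
    ∃ L : Language (α × Bool), L.IsRegular ∧
        sub S π ↑H ⊆ L ∧ ∀ w ∈ L, ev π w ∈ H :=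
  exists_inverse_automaton_sandwich_general π hπ S hS H hH
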